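/- Let a < b be real numbers, let L > 0, and let f : ℝ → ℝ be continuously differentiable on [a,b] with derivative Lipschitz continuous on [a,b] with Lipschitz constant L. Then the convex envelope conv_{[a,b]} f is differentiable on [a,b] and its derivative is Lipschitz continuous on [a,b] with Lipschitz constant at most L. -/

import Mathlib

/-- The convex envelope of `f` on the interval `[a,b]`:
`conv_{[a,b]} f (τ) = sup { g τ : g convex on [a,b], g ≤ f on [a,b] }`. -/
noncomputable def convEnv (a b : ℝ) (f : ℝ → ℝ) (τ : ℝ) : ℝ :=
  sSup {y : ℝ | ∃ g : ℝ → ℝ, ConvexOn ℝ (Set.Icc a b) g ∧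
    (∀ z ∈ Set.Icc a b, g z ≤ f z) ∧ g τ = y}

/-!
The envelope `E` is convex, so it suffices to find at every `τ` a slope `m` with
`E z ≤ E τ + m (z - τ) + L/2 (z - τ)²`: together with convexity this makes `E` differentiable on
`(a, b)` with an `L`-Lipschitz derivative, which then extends to the endpoints. Where `E τ = f τ`,
the Taylor bound of `f` at `τ` gives it. Otherwise `τ` lies in a gap `(α, β)` between contact
points, on which `E` is the chord of `f`; beyond the gap the Taylor bound of `f` at `α` or `β`
applies, because the chord lies below `f` at `τ`.
-/

open Set
open scoped NNReal

theorem sub_le_of_abs_hasDerivWithinAt_le {g g' : ℝ → ℝ} {s : Set ℝ} (hs : Convex ℝ s)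
    {K x y : ℝ} (hg : ∀ t ∈ s, HasDerivWithinAt g (g' t) s t)
    (hbound : ∀ t ∈ s, |g' t| ≤ K * |t - x|) (hx : x ∈ s) (hy : y ∈ s) :
    g y - g x ≤ K / 2 * (y - x) ^ 2 := by
  set Q : ℝ → ℝ := fun t => K / 2 * (t - x) ^ 2 - g t
  have hQ : ∀ t ∈ s, HasDerivWithinAt Q (K * (t - x) - g' t) s t := fun t ht => by
    have hq : HasDerivAt (fun t => K / 2 * (t - x) ^ 2) (K * (t - x)) t := by
      refine ((((hasDerivAt_id' t).sub_const x).pow 2).const_mul (K / 2)).congr_deriv ?_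
      norm_num; ring
    exact hq.hasDerivWithinAt.sub (hg t ht)
  have hderiv {D : Set ℝ} (hD : D ⊆ s) (t : ℝ) (ht : t ∈ interior D) :
      HasDerivWithinAt Q (K * (t - x) - g' t) (interior D) t :=
    (hQ t (hD (interior_subset ht))).mono (interior_subset.trans hD)
  have hcont {D : Set ℝ} (hD : D ⊆ s) : ContinuousOn Q D := fun t ht =>
    (hQ t (hD ht)).continuousWithinAt.mono hD
  suffices Q x ≤ Q y by simp only [Q] at this; linarith
  rcases le_total x y with hxy | hyx
  · have hD : s ∩ Ici x ⊆ s := inter_subset_left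
    refine monotoneOn_of_hasDerivWithinAt_nonneg (hs.inter (convex_Ici x)) (hcont hD)
      (hderiv hD) (fun t ht => ?_) ⟨hx, le_refl x⟩ ⟨hy, hxy⟩ hxy
    rw [interior_inter, interior_Ici] at ht
    have := (abs_le.mp (hbound t (interior_subset ht.1))).2
    rw [abs_of_pos (sub_pos.mpr ht.2)] at this
    linarith
  · have hD : s ∩ Iic x ⊆ s := inter_subset_left
    refine antitoneOn_of_hasDerivWithinAt_nonpos (hs.inter (convex_Iic x)) (hcont hD)
      (hderiv hD) (fun t ht => ?_) ⟨hy, hyx⟩ ⟨hx, le_refl x⟩ hyx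
    rw [interior_inter, interior_Iic] at ht
    have := (abs_le.mp (hbound t (interior_subset ht.1))).1
    rw [abs_of_neg (sub_neg.mpr ht.2)] at this
    linarith

theorem abs_sub_sub_le_of_lipschitzOnWith {f f' : ℝ → ℝ} {s : Set ℝ} (hs : Convex ℝ s)
    {K : ℝ≥0} (hf : ∀ t ∈ s, HasDerivWithinAt f (f' t) s t) (hlip : LipschitzOnWith K f' s)
    {x y : ℝ} (hx : x ∈ s) (hy : y ∈ s) :
    |f y - f x - f' x * (y - x)| ≤ K / 2 * (y - x) ^ 2 := by
  have hbound : ∀ t ∈ s, |f' t - f' x| ≤ K * |t - x| := fun t ht => by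
    simpa only [Real.dist_eq] using hlip.dist_le_mul t ht x hx
  have hg : ∀ t ∈ s, HasDerivWithinAt (fun t => f t - f' x * t) (f' t - f' x) s t := fun t ht =>
    ((hf t ht).sub ((hasDerivAt_id' t).const_mul (f' x)).hasDerivWithinAt).congr_deriv (by ring)
  have hup := sub_le_of_abs_hasDerivWithinAt_le hs hg hbound hx hy
  have hlo := sub_le_of_abs_hasDerivWithinAt_le (g := fun t => -(f t - f' x * t)) hs
    (fun t ht => (hg t ht).neg) (fun t ht => by simpa only [abs_neg] using hbound t ht) hx hy
  rw [abs_le]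
  constructor <;> linarith

theorem convexOn_line {s : Set ℝ} (hs : Convex ℝ s) (x₀ y₀ m : ℝ) :
    ConvexOn ℝ s fun w => y₀ + m * (w - x₀) :=
  ⟨hs, fun x _ y _ p q _ _ hpq => le_of_eq <| by
    simp only [smul_eq_mul]; linear_combination (y₀ - m * x₀) * hpq.symm⟩

section ConvexEnvelope

variable {a b : ℝ} {f : ℝ → ℝ}

theorem le_convEnv {g : ℝ → ℝ} (hg : ConvexOn ℝ (Icc a b) g) (hgf : ∀ z ∈ Icc a b, g z ≤ f z)
    {τ : ℝ} (hτ : τ ∈ Icc a b) : g τ ≤ convEnv a b f τ :=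
  le_csSup ⟨f τ, by rintro _ ⟨_, -, hhf, rfl⟩; exact hhf τ hτ⟩ ⟨g, hg, hgf, rfl⟩

theorem convEnv_le (hf : BddBelow (f '' Icc a b)) {τ : ℝ} (hτ : τ ∈ Icc a b) :
    convEnv a b f τ ≤ f τ := by
  obtain ⟨c, hc⟩ := hf
  exact csSup_le ⟨c, fun _ => c, convexOn_const c (convex_Icc a b),
    fun z hz => hc (mem_image_of_mem f hz), rfl⟩ (by rintro _ ⟨g, -, hgf, rfl⟩; exact hgf τ hτ)

theorem convexOn_convEnv (hf : BddBelow (f '' Icc a b)) : ConvexOn ℝ (Icc a b) (convEnv a b f) := by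
  obtain ⟨c, hc⟩ := hf
  refine ⟨convex_Icc a b, fun x hx y hy p q hp hq hpq => ?_⟩
  refine csSup_le ⟨c, fun _ => c, convexOn_const c (convex_Icc a b),
    fun z hz => hc (mem_image_of_mem f hz), rfl⟩ ?_
  rintro _ ⟨g, hg, hgf, rfl⟩
  calc g (p • x + q • y) ≤ p • g x + q • g y := hg.2 hx hy hp hq hpq
    _ ≤ p • convEnv a b f x + q • convEnv a b f y := by
      gcongr <;> exact le_convEnv hg hgf ‹_›

end ConvexEnvelope

section Convex

variable {s : Set ℝ} {g : ℝ → ℝ}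

theorem ConvexOn.le_chord (hg : ConvexOn ℝ s g) {x y w : ℝ} (hx : x ∈ s) (hy : y ∈ s)
    (hw : w ∈ uIcc x y) : g w ≤ g x + (g y - g x) / (y - x) * (w - x) := by
  rcases eq_or_ne x y with rfl | hxy
  · simp_all
  have hyx : y - x ≠ 0 := sub_ne_zero.mpr hxy.symm
  have hpq : 0 ≤ (y - w) / (y - x) ∧ 0 ≤ (w - x) / (y - x) := by
    rcases mem_uIcc.mp hw with ⟨h1, h2⟩ | ⟨h1, h2⟩
    · have : 0 < y - x := by linarith [lt_of_le_of_ne (h1.trans h2) hxy]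
      constructor <;> apply div_nonneg <;> linarith
    · have : y - x < 0 := by linarith [lt_of_le_of_ne (h1.trans h2) hxy.symm]
      constructor <;> apply div_nonneg_of_nonpos <;> linarith
  have key := hg.2 hx hy hpq.1 hpq.2 (by rw [← add_div, sub_add_sub_cancel, div_self hyx])
  have hcomb : ((y - w) / (y - x)) • x + ((w - x) / (y - x)) • y = w := by
    simp only [smul_eq_mul]; field_simp; ring
  rw [hcomb] at key
  calc g w ≤ ((y - w) / (y - x)) • g x + ((w - x) / (y - x)) • g y := key
    _ = g x + (g y - g x) / (y - x) * (w - x) := by simp only [smul_eq_mul]; field_simp; ring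

theorem ConvexOn.chord_le (hg : ConvexOn ℝ s g) {x y w : ℝ} (hx : x ∈ s) (hy : y ∈ s)
    (hw : w ∈ s) (hxy : x < y) (hw' : w ∉ Ioo x y) :
    g x + (g y - g x) / (y - x) * (w - x) ≤ g w := by
  rcases lt_trichotomy w x with hwx | rfl | hxw
  · have := hg.secant_mono hx hw hy hwx.ne hxy.ne' (hwx.trans hxy).le
    rw [div_le_iff_of_neg (sub_neg.mpr hwx)] at this
    linarith
  · simp
  · have hyw : y ≤ w := not_lt.mp fun h => hw' ⟨hxw, h⟩
    have := hg.secant_mono hx hy hw hxy.ne' hxw.ne' hyw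
    rw [le_div_iff₀ (sub_pos.mpr hxw)] at this
    linarith

theorem ConvexOn.continuousWithinAt_of_line_le {x y p : ℝ} (hg : ConvexOn ℝ (uIcc x y) g)
    (hline : ∀ w ∈ uIcc x y, g x + p * (w - x) ≤ g w) : ContinuousWithinAt g (uIcc x y) x := by
  have hlim : ∀ q : ℝ, Filter.Tendsto (fun w => g x + q * (w - x)) (nhdsWithin x (uIcc x y))
      (nhds (g x)) := fun q => by
    refine tendsto_nhdsWithin_of_tendsto_nhds (Continuous.tendsto' ?_ x _ (by simp))
    fun_prop
  exact tendsto_of_tendsto_of_tendsto_of_le_of_le' (hlim p) (hlim _)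
    (eventually_nhdsWithin_of_forall hline)
    (eventually_nhdsWithin_of_forall fun w hw =>
      hg.le_chord left_mem_uIcc right_mem_uIcc hw)

end Convex

section Contact

variable {a b : ℝ} {f : ℝ → ℝ}

theorem convEnv_eq_chord (hf : ContinuousOn f (Icc a b)) {α β : ℝ} (hα : α ∈ Icc a b)
    (hβ : β ∈ Icc a b) (hαβ : α < β) (hcα : f α ≤ convEnv a b f α)
    (hcβ : f β ≤ convEnv a b f β) (hgap : ∀ w ∈ Ioo α β, convEnv a b f w < f w)
    {τ : ℝ} (hτ : τ ∈ Icc α β) :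
    convEnv a b f τ = f α + (f β - f α) / (β - α) * (τ - α) := by
  have hbdd : BddBelow (f '' Icc a b) := isCompact_Icc.bddBelow_image hf
  have hE := convexOn_convEnv hbdd
  have hEα : convEnv a b f α = f α := le_antisymm (convEnv_le hbdd hα) hcα
  have hEβ : convEnv a b f β = f β := le_antisymm (convEnv_le hbdd hβ) hcβ
  set m := (f β - f α) / (β - α)
  have hsub : Icc α β ⊆ Icc a b := Icc_subset_Icc hα.1 hβ.2
  obtain ⟨w₀, hw₀, hmax⟩ := isCompact_Icc.exists_isMaxOn (nonempty_Icc.mpr hαβ.le)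
    (f := fun w => f α + m * (w - α) - f w) (continuousOn_const.add (by fun_prop) |>.sub
      (hf.mono hsub))
  set d := f α + m * (w₀ - α) - f w₀
  have hd : 0 ≤ d := by
    simpa only [sub_self, mul_zero, add_zero] using isMaxOn_iff.mp hmax α (left_mem_Icc.mpr hαβ.le)
  -- Lowered by its largest excess `d` over `f` on `[α, β]`, the chord becomes a convex minorant
  -- of `f` (outside `(α, β)` it lies below the envelope), hence lies below the envelope; so it
  -- meets `f` only at contact points, i.e. at `α` or `β`, which forces `d = 0`.
  have hminor : ∀ z ∈ Icc a b, f α - d + m * (z - α) ≤ f z := fun z hz => by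
    by_cases hz' : z ∈ Ioo α β
    · linarith [isMaxOn_iff.mp hmax z (Ioo_subset_Icc_self hz')]
    · have := hE.chord_le hα hβ hz hαβ hz'
      rw [hEα, hEβ] at this
      linarith [convEnv_le hbdd hz]
  have hline : ∀ z ∈ Icc a b, f α - d + m * (z - α) ≤ convEnv a b f z := fun z hz =>
    le_convEnv (convexOn_line (convex_Icc a b) α (f α - d) m) hminor hz
  have hd0 : d = 0 := by
    have hw₀c : f w₀ ≤ convEnv a b f w₀ := by linarith [hline w₀ (hsub hw₀)]
    rcases eq_endpoints_or_mem_Ioo_of_mem_Icc hw₀ with rfl | rfl | hw₀'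
    · simp [d]
    · simp only [d, m]; rw [div_mul_cancel₀ _ (sub_ne_zero.mpr hαβ.ne')]; ring
    · exact absurd hw₀c (not_le.mpr (hgap w₀ hw₀'))
  refine le_antisymm ?_ (by linarith [hline τ (hsub hτ)])
  have := hE.le_chord hα hβ (Icc_subset_uIcc hτ)
  rwa [hEα, hEβ] at this

theorem exists_contact_around (hf : ContinuousOn f (Icc a b))
    (hE : ContinuousOn (convEnv a b f) (Icc a b)) (ha : f a ≤ convEnv a b f a)
    (hb : f b ≤ convEnv a b f b) {τ : ℝ} (hτ : τ ∈ Icc a b) (hτc : convEnv a b f τ < f τ) :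
    ∃ α ∈ Ico a τ, ∃ β ∈ Ioc τ b, f α ≤ convEnv a b f α ∧ f β ≤ convEnv a b f β ∧
      ∀ w ∈ Ioo α β, convEnv a b f w < f w := by
  set E := convEnv a b f
  have hcompact {c d : ℝ} (hcd : Icc c d ⊆ Icc a b) : IsCompact {w ∈ Icc c d | f w ≤ E w} :=
    isCompact_Icc.of_isClosed_subset
      (isClosed_Icc.isClosed_le (hf.mono hcd) (hE.mono hcd)) (sep_subset _ _)
  obtain ⟨α, ⟨hαI, hαc⟩, hαmax⟩ := (hcompact (Icc_subset_Icc_right hτ.2)).exists_isGreatest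
    ⟨a, ⟨le_rfl, hτ.1⟩, ha⟩
  obtain ⟨β, ⟨hβI, hβc⟩, hβmin⟩ := (hcompact (Icc_subset_Icc_left hτ.1)).exists_isLeast
    ⟨b, ⟨hτ.2, le_rfl⟩, hb⟩
  have hατ : α ≠ τ := by rintro rfl; linarith
  have hβτ : β ≠ τ := by rintro rfl; linarith
  refine ⟨α, ⟨hαI.1, lt_of_le_of_ne hαI.2 hατ⟩, β, ⟨lt_of_le_of_ne' hβI.1 hβτ, hβI.2⟩,
    hαc, hβc, fun w hw => not_le.mp fun hwc => ?_⟩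
  rcases le_total w τ with hwτ | hτw
  · exact absurd (hαmax ⟨⟨hαI.1.trans hw.1.le, hwτ⟩, hwc⟩) (not_le.mpr hw.1)
  · exact absurd (hβmin ⟨⟨hτw, hw.2.le.trans hβI.2⟩, hwc⟩) (not_le.mpr hw.2)

end Contact

theorem le_line_add_sq_beyond_contact {f : ℝ → ℝ} {K β τ z m d : ℝ} (hK : 0 ≤ K)
    (hτup : f τ ≤ f β + d * (τ - β) + K / 2 * (τ - β) ^ 2)
    (hzup : f z ≤ f β + d * (z - β) + K / 2 * (z - β) ^ 2)
    (hτ : f β + m * (τ - β) ≤ f τ) (hτβ : τ ≠ β) (hside : (z - β) * (τ - β) ≤ 0) :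
    f z ≤ f β + m * (z - β) + K / 2 * (z - τ) ^ 2 := by
  have hv : (m - d) * (τ - β) ≤ K / 2 * (τ - β) ^ 2 := by linarith
  rcases hτβ.lt_or_gt with h | h
  · have hu : 0 ≤ z - β := by nlinarith
    have : K / 2 * (τ - β) ≤ m - d := by nlinarith
    nlinarith
  · have hu : z - β ≤ 0 := by nlinarith
    have : m - d ≤ K / 2 * (τ - β) := by nlinarith
    nlinarith

section LipschitzDeriv

variable {a b : ℝ} {f f' : ℝ → ℝ} {K : ℝ≥0}

theorem exists_line_le_convEnv_of_endpoint
    (hf : ∀ τ ∈ Icc a b, HasDerivWithinAt f (f' τ) (Icc a b) τ)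
    (hlip : LipschitzOnWith K f' (Icc a b)) {x : ℝ} (hx : x = a ∨ x = b) :
    ∃ p, ∀ z ∈ Icc a b, f x + p * (z - x) ≤ convEnv a b f z := by
  have htaylor {x z : ℝ} (hx : x ∈ Icc a b) (hz : z ∈ Icc a b) :
      f x + f' x * (z - x) - K / 2 * (z - x) ^ 2 ≤ f z := by
    linarith [(abs_le.mp (abs_sub_sub_le_of_lipschitzOnWith (convex_Icc a b) hf hlip hx hz)).1]
  suffices ∃ p, ∀ z ∈ Icc a b, f x + p * (z - x) ≤ f z by
    obtain ⟨p, hp⟩ := this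
    exact ⟨p, fun z hz => le_convEnv (convexOn_line (convex_Icc a b) x (f x) p) hp hz⟩
  rcases hx with rfl | rfl
  · refine ⟨f' x - K / 2 * (b - x), fun z hz => ?_⟩
    have := htaylor (left_mem_Icc.mpr (hz.1.trans hz.2)) hz
    nlinarith [mul_nonneg (mul_nonneg K.coe_nonneg (sub_nonneg.2 hz.1)) (sub_nonneg.2 hz.2)]
  · refine ⟨f' x + K / 2 * (x - a), fun z hz => ?_⟩
    have := htaylor (right_mem_Icc.mpr (hz.1.trans hz.2)) hz
    nlinarith [mul_nonneg (mul_nonneg K.coe_nonneg (sub_nonneg.2 hz.1)) (sub_nonneg.2 hz.2)]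

theorem continuousOn_convEnv (hf : ∀ τ ∈ Icc a b, HasDerivWithinAt f (f' τ) (Icc a b) τ)
    (hlip : LipschitzOnWith K f' (Icc a b)) : ContinuousOn (convEnv a b f) (Icc a b) := by
  have hbdd : BddBelow (f '' Icc a b) :=
    isCompact_Icc.bddBelow_image fun x hx => (hf x hx).continuousWithinAt
  have hE := convexOn_convEnv hbdd
  have hend {x y : ℝ} (hx : x = a ∨ x = b) (hxy : uIcc x y = Icc a b) :
      ContinuousWithinAt (convEnv a b f) (Icc a b) x := by
    obtain ⟨p, hp⟩ := exists_line_le_convEnv_of_endpoint hf hlip hx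
    have hxI : x ∈ Icc a b := hxy ▸ left_mem_uIcc
    have hEx : convEnv a b f x = f x := le_antisymm (convEnv_le hbdd hxI) (by simpa using hp x hxI)
    rw [← hxy] at hE hp ⊢
    exact hE.continuousWithinAt_of_line_le (p := p) (by rwa [hEx])
  intro x hx
  rcases eq_endpoints_or_mem_Ioo_of_mem_Icc hx with rfl | rfl | hx'
  · exact hend (Or.inl rfl) (uIcc_of_le (hx.1.trans hx.2))
  · exact hend (Or.inr rfl) (uIcc_of_ge (hx.1.trans hx.2))
  · rw [← interior_Icc] at hx'
    exact ((hE.continuousOn_interior x hx').continuousAt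
      (isOpen_interior.mem_nhds hx')).continuousWithinAt

theorem convEnv_le_quadratic (hf : ∀ τ ∈ Icc a b, HasDerivWithinAt f (f' τ) (Icc a b) τ)
    (hlip : LipschitzOnWith K f' (Icc a b)) {τ : ℝ} (hτ : τ ∈ Icc a b) :
    ∃ m, ∀ z ∈ Icc a b,
      convEnv a b f z ≤ convEnv a b f τ + m * (z - τ) + K / 2 * (z - τ) ^ 2 := by
  have hfc : ContinuousOn f (Icc a b) := fun x hx => (hf x hx).continuousWithinAt
  have hbdd : BddBelow (f '' Icc a b) := isCompact_Icc.bddBelow_image hfc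
  have htaylor {x z : ℝ} (hx : x ∈ Icc a b) (hz : z ∈ Icc a b) :
      f z ≤ f x + f' x * (z - x) + K / 2 * (z - x) ^ 2 := by
    linarith [(abs_le.mp (abs_sub_sub_le_of_lipschitzOnWith (convex_Icc a b) hf hlip hx hz)).2]
  by_cases hcontact : f τ ≤ convEnv a b f τ
  · exact ⟨f' τ, fun z hz => by linarith [convEnv_le hbdd hz, htaylor hτ hz]⟩
  have hcontact_end {x : ℝ} (hx : x = a ∨ x = b) : f x ≤ convEnv a b f x := by
    obtain ⟨p, hp⟩ := exists_line_le_convEnv_of_endpoint hf hlip hx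
    have hxI : x ∈ Icc a b := by rcases hx with rfl | rfl <;> simp [hτ.1.trans hτ.2]
    simpa using hp x hxI
  obtain ⟨α, hα, β, hβ, hcα, hcβ, hgap⟩ := exists_contact_around hfc
    (continuousOn_convEnv hf hlip) (hcontact_end (Or.inl rfl)) (hcontact_end (Or.inr rfl)) hτ
    (not_le.mp hcontact)
  have hαI : α ∈ Icc a b := ⟨hα.1, hα.2.le.trans hτ.2⟩
  have hβI : β ∈ Icc a b := ⟨hτ.1.trans hβ.1.le, hβ.2⟩
  have hαβ : α < β := hα.2.trans hβ.1
  have hchord {w : ℝ} (hw : w ∈ Icc α β) := convEnv_eq_chord hfc hαI hβI hαβ hcα hcβ hgap hw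
  set m := (f β - f α) / (β - α)
  have hfβ : f α + m * (β - α) = f β := by
    simp only [m]; rw [div_mul_cancel₀ _ (sub_ne_zero.mpr hαβ.ne')]; ring
  have hEτ := hchord ⟨hα.2.le, hβ.1.le⟩
  have hEf := convEnv_le hbdd hτ
  refine ⟨m, fun z hz => ?_⟩
  rcases lt_or_ge z α with hzα | hαz
  · have := le_line_add_sq_beyond_contact K.coe_nonneg (htaylor hαI hτ) (htaylor hαI hz)
      (m := m) (by linarith) hα.2.ne' (by nlinarith [hα.2])
    linarith [convEnv_le hbdd hz]
  rcases le_or_gt z β with hzβ | hβz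
  · rw [hchord ⟨hαz, hzβ⟩]
    nlinarith [sq_nonneg (z - τ), K.coe_nonneg]
  · have := le_line_add_sq_beyond_contact K.coe_nonneg (htaylor hβI hτ) (htaylor hβI hz)
      (m := m) (by linarith) hβ.1.ne (by nlinarith [hβ.1])
    linarith [convEnv_le hbdd hz]

end LipschitzDeriv

section Differentiability

variable {s : Set ℝ} {g : ℝ → ℝ}

theorem ConvexOn.hasDerivAt_of_le_quadratic (hg : ConvexOn ℝ s g) {τ m C : ℝ} (hτ : s ∈ nhds τ)
    (hup : ∀ z ∈ s, g z ≤ g τ + m * (z - τ) + C * (z - τ) ^ 2) : HasDerivAt g m τ := by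
  -- Convexity at the midpoint `τ` of `z` and `2τ - z` turns the upper bound into a lower one.
  have hlow {z : ℝ} (hz : z ∈ s) (hz' : 2 * τ - z ∈ s) :
      g τ + m * (z - τ) - C * (z - τ) ^ 2 ≤ g z := by
    have hmid := hg.2 hz hz' (by norm_num : (0 : ℝ) ≤ 1 / 2) (by norm_num : (0 : ℝ) ≤ 1 / 2)
      (by norm_num)
    rw [show (1 / 2 : ℝ) • z + (1 / 2 : ℝ) • (2 * τ - z) = τ by simp only [smul_eq_mul]; ring,
      smul_eq_mul, smul_eq_mul] at hmid
    nlinarith [hup _ hz']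
  have hrefl : Filter.Tendsto (fun z => 2 * τ - z) (nhds τ) (nhds τ) := by
    simpa [two_mul] using (continuous_const.sub continuous_id).tendsto τ (f := fun z => 2 * τ - z)
  rw [hasDerivAt_iff_isLittleO]
  refine Asymptotics.IsBigO.trans_isLittleO (g := fun z => ‖z - τ‖ ^ 2) ?_
    (Asymptotics.isLittleO_pow_sub_sub τ one_lt_two)
  refine Asymptotics.IsBigO.of_bound C ?_
  filter_upwards [hτ, hrefl hτ] with z hz hz'
  simp only [Real.norm_eq_abs, sq_abs, abs_sq, smul_eq_mul, abs_le]
  constructor <;> nlinarith [hlow hz hz', hup z hz]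

theorem ConvexOn.lipschitzOnWith_of_le_quadratic {g' : ℝ → ℝ} {K : ℝ≥0} (hg : ConvexOn ℝ s g)
    (hd : ∀ x ∈ s, HasDerivAt g (g' x) x)
    (hup : ∀ x ∈ s, ∀ z ∈ s, g z ≤ g x + g' x * (z - x) + K / 2 * (z - x) ^ 2) :
    LipschitzOnWith K g' s := by
  refine LipschitzOnWith.of_dist_le_mul fun x hx y hy => ?_
  wlog hxy : x < y generalizing x y
  · rcases (not_lt.mp hxy).eq_or_lt with rfl | hyx
    · simp
    · rw [dist_comm, dist_comm x]; exact this y hy x hx hyx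
  have hmono : g' x ≤ g' y :=
    (hg.le_slope_of_hasDerivAt hx hy hxy (hd x hx)).trans
      (hg.slope_le_of_hasDerivAt hx hy hxy (hd y hy))
  have hgap : (g' y - g' x) * (y - x) ≤ K * (y - x) ^ 2 := by
    nlinarith [hup x hx y hy, hup y hy x hx]
  rw [Real.dist_eq, Real.dist_eq, abs_sub_comm, abs_of_nonneg (sub_nonneg.mpr hmono),
    abs_of_neg (sub_neg.mpr hxy)]
  nlinarith [sub_pos.mpr hxy]

theorem exists_hasDerivWithinAt_Icc_of_lipschitzOnWith {a b : ℝ} {g' : ℝ → ℝ} {K : ℝ≥0}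
    (hab : a < b) (hg : ContinuousOn g (Icc a b)) (hd : ∀ x ∈ Ioo a b, HasDerivAt g (g' x) x)
    (hlip : LipschitzOnWith K g' (Ioo a b)) :
    ∃ G : ℝ → ℝ, (∀ x ∈ Icc a b, HasDerivWithinAt g (G x) (Icc a b) x) ∧
      LipschitzOnWith K G (Icc a b) := by
  obtain ⟨G, hGlip, hGeq⟩ := hlip.extend_real
  refine ⟨G, fun x hx => ?_, hGlip.lipschitzOnWith⟩
  have hdiff : DifferentiableOn ℝ g (Ioo a b) := fun x hx =>
    (hd x hx).differentiableAt.differentiableWithinAt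
  have hderiv : EqOn (deriv g) G (Ioo a b) := fun x hx => (hd x hx).deriv.trans (hGeq hx)
  have hGlim (l : Filter ℝ) (hl : l ≤ nhds x) (hmem : Ioo a b ∈ l) :
      Filter.Tendsto (deriv g) l (nhds (G x)) :=
    (hGlip.continuous.continuousAt.tendsto.mono_left hl).congr'
      (Filter.eventuallyEq_of_mem hmem hderiv).symm
  have hcont := (hg x hx).mono Ioo_subset_Icc_self
  rcases eq_endpoints_or_mem_Ioo_of_mem_Icc hx with rfl | rfl | hx'
  · exact (hasDerivWithinAt_Ici_of_tendsto_deriv hdiff hcont (Ioo_mem_nhdsGT hab)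
      (hGlim _ nhdsWithin_le_nhds (Ioo_mem_nhdsGT hab))).mono Icc_subset_Ici_self
  · exact (hasDerivWithinAt_Iic_of_tendsto_deriv hdiff hcont (Ioo_mem_nhdsLT hab)
      (hGlim _ nhdsWithin_le_nhds (Ioo_mem_nhdsLT hab))).mono Icc_subset_Iic_self
  · exact (hGeq hx' ▸ hd x hx').hasDerivWithinAt

end Differentiability

theorem convEnv_C11_general (a b : ℝ) (hab : a < b) (L : ℝ)
    (f f' : ℝ → ℝ)
    (hf' : ∀ τ ∈ Set.Icc a b, HasDerivWithinAt f (f' τ) (Set.Icc a b) τ)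
    (hlip : LipschitzOnWith (Real.toNNReal L) f' (Set.Icc a b)) :
    ∃ E' : ℝ → ℝ,
      (∀ τ ∈ Set.Icc a b, HasDerivWithinAt (convEnv a b f) (E' τ) (Set.Icc a b) τ) ∧
      LipschitzOnWith (Real.toNNReal L) E' (Set.Icc a b) := by
  have hbdd : BddBelow (f '' Icc a b) :=
    isCompact_Icc.bddBelow_image fun x hx => (hf' x hx).continuousWithinAt
  have hE : ConvexOn ℝ (Ioo a b) (convEnv a b f) :=
    (convexOn_convEnv hbdd).subset Ioo_subset_Icc_self (convex_Ioo a b)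
  have hquad : ∀ τ ∈ Ioo a b, HasDerivAt (convEnv a b f) (deriv (convEnv a b f) τ) τ ∧
      ∀ z ∈ Ioo a b, convEnv a b f z ≤ convEnv a b f τ + deriv (convEnv a b f) τ * (z - τ) +
        L.toNNReal / 2 * (z - τ) ^ 2 := by
    intro τ hτ
    obtain ⟨m, hm⟩ := convEnv_le_quadratic hf' hlip (Ioo_subset_Icc_self hτ)
    have hm' := fun z hz => hm z (Ioo_subset_Icc_self hz)
    have hd := hE.hasDerivAt_of_le_quadratic (isOpen_Ioo.mem_nhds hτ) hm'
    exact hd.deriv ▸ ⟨hd, hm'⟩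
  exact exists_hasDerivWithinAt_Icc_of_lipschitzOnWith hab (continuousOn_convEnv hf' hlip)
    (fun τ hτ => (hquad τ hτ).1)
    (hE.lipschitzOnWith_of_le_quadratic (fun τ hτ => (hquad τ hτ).1) fun τ hτ => (hquad τ hτ).2)

/-- Griewank–Rabier; used in Step 5 of the proof of Lemma 3.2. If `f`
is `C^{1,1}_L` on `[a,b]` (differentiable with `L`-Lipschitz derivative), then its convex
envelope on `[a,b]` is also differentiable with `L`-Lipschitz derivative. -/
theorem convEnv_C11 (a b : ℝ) (hab : a < b) (L : ℝ) (hL : 0 < L)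
    (f f' : ℝ → ℝ)
    (hf' : ∀ τ ∈ Set.Icc a b, HasDerivWithinAt f (f' τ) (Set.Icc a b) τ)
    (hlip : LipschitzOnWith (Real.toNNReal L) f' (Set.Icc a b)) :
    ∃ E' : ℝ → ℝ,
      (∀ τ ∈ Set.Icc a b, HasDerivWithinAt (convEnv a b f) (E' τ) (Set.Icc a b) τ) ∧
      LipschitzOnWith (Real.toNNReal L) E' (Set.Icc a b) :=
  convEnv_C11_general a b hab L f f' hf' hlip
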